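/- Let R be a binary relation on ℕ whose convolution language is regular, and suppose that (ℕ, R) is a directed tree. Then there exists a constant D > 0 such that for every pair (m, n) ∈ R with m ≥ D and n ≥ D, the column indices differ by at most one: |⌊m/D⌋ − ⌊n/D⌋| ≤ 1. (In the diagrammatic language: every long arrow must start or end in the leftmost column.) -/

import Mathlib

/-- The convolution word of the pair `(m, n)`, over the three-letter alphabet `Fin 3`
(`0` plays the role of `s`, `1` of `l`, `2` of `r`). -/
def convWord (m n : ℕ) : List (Fin 3) :=
  List.replicate (min m n) 0 ++ List.replicate (m - min m n) 1 ++
    List.replicate (n - min m n) 2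

/-- The convolution language of a binary relation on `ℕ`. -/
def convLang (R : ℕ → ℕ → Prop) : Language (Fin 3) :=
  {w | ∃ m n, R m n ∧ w = convWord m n}

/-- A binary relation on `ℕ` is regular if its convolution language is regular. -/
def RegularRel (R : ℕ → ℕ → Prop) : Prop :=
  (convLang R).IsRegular
/-- The underlying (simple, undirected) graph of a binary relation `η`. -/
def adjGraph {V : Type*} (η : V → V → Prop) : SimpleGraph V where
  Adj u v := u ≠ v ∧ (η u v ∨ η v u)
  symm := ⟨fun _ _ h => ⟨h.1.symm, h.2.symm⟩⟩
  loopless := ⟨fun _ h => h.1 rfl⟩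

/-- `η` is a directed tree if it is irreflexive, no pair is related in both
directions, and the underlying undirected graph is a tree. -/
def IsDirectedTree {V : Type*} (η : V → V → Prop) : Prop :=
  (∀ v, ¬ η v v) ∧ (∀ u v, ¬ (η u v ∧ η v u)) ∧ (adjGraph η).IsTree

/-!
Fix a DFA with `c` states accepting the convolution language and let `p = c!`, a common period of
every state sequence read along a block of at least `c` equal letters. If `R m n` with `n ≥ c`
and `m > n + c`, both blocks of `conv(m, n) = s^n l^(m-n)` can be pumped by `p` independently,
so `R (m + (t+u)p) (n + tp)` for all `t, u`. The instances `(t, u) = (0,1), (1,0), (1,1), (0,2)`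
close the cycle `n — m+p — n+p — m+2p — n` in the underlying graph, contradicting acyclicity.
The case `n > m + c` is the same argument for the flipped relation, whose convolution words are
those of `R` with `l` and `r` exchanged. Hence `|m - n| ≤ c` once `m, n ≥ c`, and the columns
for `D = c + 1` differ by at most one.
-/

open Function Fintype

theorem Function.iterate_mem_periodicPts_of_card_le {α : Type*} [Fintype α] (f : α → α) (x : α)
    {k : ℕ} (hk : card α ≤ k) : f^[k] x ∈ periodicPts f := by
  obtain ⟨i, j, hne, heq⟩ :=
    exists_ne_map_eq_of_card_lt (fun i : Fin (card α + 1) => f^[i] x) (by simp)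
  wlog hij : i < j generalizing i j
  · exact this j i hne.symm heq.symm (lt_of_le_of_ne (not_lt.1 hij) hne.symm)
  have hper : IsPeriodicPt f (j - i) (f^[i] x) := by
    rw [IsPeriodicPt, IsFixedPt, ← iterate_add_apply, Nat.sub_add_cancel hij.le]
    exact heq.symm
  have hk' := hper.apply_iterate (k - i)
  rw [← iterate_add_apply, Nat.sub_add_cancel (by omega)] at hk'
  exact mk_mem_periodicPts (by omega) hk'

theorem Function.iterate_add_mul_factorial_card {α : Type*} [Fintype α] (f : α → α) (x : α)
    {k : ℕ} (hk : card α ≤ k) (t : ℕ) : f^[k + t * (card α).factorial] x = f^[k] x := by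
  rw [add_comm, iterate_add_apply]
  exact ((mem_periodicPts_iff_isPeriodicPt_factorial_card.1
    (iterate_mem_periodicPts_of_card_le f x hk)).const_mul t).eq

namespace DFA

variable {α σ : Type*} (M : DFA α σ)

theorem evalFrom_replicate (s : σ) (a : α) (k : ℕ) :
    M.evalFrom s (List.replicate k a) = (M.step · a)^[k] s := by
  induction k generalizing s with
  | zero => rfl
  | succ k ih => simp [List.replicate_succ, evalFrom_cons, ih]

theorem eval_replicate_append_replicate_add_mul_factorial [Fintype σ] (x y : α) {a b : ℕ}
    (ha : card σ ≤ a) (hb : card σ ≤ b) (t u : ℕ) :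
    M.eval (List.replicate (a + t * (card σ).factorial) x ++
        List.replicate (b + u * (card σ).factorial) y) =
      M.eval (List.replicate a x ++ List.replicate b y) := by
  simp only [eval, evalFrom_of_append, evalFrom_replicate, iterate_add_mul_factorial_card _ _ ha,
    iterate_add_mul_factorial_card _ _ hb]

end DFA

theorem SimpleGraph.IsAcyclic.eq_of_adj_of_adj {V : Type*} {G : SimpleGraph V}
    (hG : G.IsAcyclic) {a b c c' : V} (hab : a ≠ b) (hac : G.Adj a c) (hcb : G.Adj c b)
    (hac' : G.Adj a c') (hc'b : G.Adj c' b) : c = c' := by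
  let path {d : V} (had : G.Adj a d) (hdb : G.Adj d b) : G.Path a b :=
    ⟨.cons had (.cons hdb .nil), by simp [Walk.isPath_def, hab, had.ne, hdb.ne]⟩
  simpa [path] using congrArg (fun p : G.Path a b => p.1.snd)
    ((hG.subsingleton_path a b).elim (path hac hcb) (path hac' hc'b))

theorem Nat.natAbs_div_sub_div_le_one {m n D : ℕ} (hm : m ≤ n + D) (hn : n ≤ m + D) :
    (((m / D : ℕ) : ℤ) - ((n / D : ℕ) : ℤ)).natAbs ≤ 1 := by
  rcases D.eq_zero_or_pos with rfl | hD
  · simp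
  have hm' := Nat.div_le_div_right (c := D) hm
  have hn' := Nat.div_le_div_right (c := D) hn
  rw [Nat.add_div_right _ hD] at hm' hn'
  omega

theorem convWord_injective : Injective2 convWord := by
  intro m m' n n' h
  have h0 := congrArg (List.count 0) h
  have h1 := congrArg (List.count 1) h
  have h2 := congrArg (List.count 2) h
  simp only [convWord, List.count_append, List.count_replicate_self, List.count_replicate,
    Fin.reduceBEq, Bool.false_eq_true, ↓reduceIte, add_zero, zero_add] at h0 h1 h2
  omega

theorem mem_convLang_convWord {R : ℕ → ℕ → Prop} {m n : ℕ} :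
    convWord m n ∈ convLang R ↔ R m n :=
  ⟨by rintro ⟨m', n', h, e⟩; obtain ⟨rfl, rfl⟩ := convWord_injective e; exact h,
    fun h => ⟨m, n, h, rfl⟩⟩

theorem convWord_add_left (n k : ℕ) :
    convWord (n + k) n = List.replicate n 0 ++ List.replicate k 1 := by
  simp [convWord]

theorem convWord_map_swap (m n : ℕ) : (convWord m n).map (Equiv.swap 1 2) = convWord n m := by
  rcases le_total m n with h | h <;> simp [convWord, h, Equiv.swap_apply_of_ne_of_ne]

theorem convLang_flip (R : ℕ → ℕ → Prop) :
    convLang (flip R) = List.map (Equiv.swap 1 2) ⁻¹' convLang R := by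
  ext w
  constructor
  · rintro ⟨m, n, h, rfl⟩
    exact ⟨n, m, h, convWord_map_swap m n⟩
  · rintro ⟨m, n, h, e⟩
    refine ⟨n, m, h, ?_⟩
    rw [← convWord_map_swap, ← e, List.map_map]
    simp [Function.comp_def]

theorem adjGraph_flip {V : Type*} (η : V → V → Prop) : adjGraph (flip η) = adjGraph η := by
  ext u v
  simp [adjGraph, flip, or_comm]

theorem le_add_card_of_rel {σ : Type*} [Fintype σ] {R : ℕ → ℕ → Prop} (M : DFA (Fin 3) σ)
    (hM : M.accepts = convLang R) (hG : (adjGraph R).IsAcyclic) {m n : ℕ} (hR : R m n)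
    (hn : card σ ≤ n) : m ≤ n + card σ := by
  by_contra! hmn
  obtain ⟨k, rfl⟩ : ∃ k, m = n + k := ⟨m - n, by omega⟩
  set p := (card σ).factorial
  have hp : 0 < p := Nat.factorial_pos _
  have pumped (t u : ℕ) : R (n + t * p + (k + u * p)) (n + t * p) := by
    rw [← mem_convLang_convWord (R := R), ← hM, convWord_add_left, DFA.mem_accepts,
      M.eval_replicate_append_replicate_add_mul_factorial _ _ hn (by omega),
      ← DFA.mem_accepts, ← convWord_add_left, hM, mem_convLang_convWord]
    exact hR
  have adj (t u : ℕ) : (adjGraph R).Adj (n + t * p) (n + k + (t + u) * p) := by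
    refine ⟨by nlinarith, Or.inr ?_⟩
    convert pumped t u using 1
    ring
  have hcycle : n + k + p = n + k + 2 * p :=
    hG.eq_of_adj_of_adj (a := n) (b := n + p) (by omega) (by simpa using adj 0 1)
      (by simpa using (adj 1 0).symm) (by simpa using adj 0 2) (by simpa using (adj 1 1).symm)
  omega

theorem stmt16 (R : ℕ → ℕ → Prop) (hreg : RegularRel R) (htree : IsDirectedTree R) :
    ∃ D : ℕ, 0 < D ∧ ∀ m n : ℕ, R m n → D ≤ m → D ≤ n →
      (((m / D : ℕ) : ℤ) - ((n / D : ℕ) : ℤ)).natAbs ≤ 1 := by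
  obtain ⟨σ, _, M, hM⟩ := hreg
  have hG : (adjGraph R).IsAcyclic := htree.2.2.isAcyclic
  have hM' : (M.comap (Equiv.swap 1 2)).accepts = convLang (flip R) := by
    rw [DFA.accepts_comap, hM, convLang_flip]
  refine ⟨card σ + 1, by omega, fun m n hR hm hn => Nat.natAbs_div_sub_div_le_one ?_ ?_⟩
  · have := le_add_card_of_rel M hM hG hR (by omega)
    omega
  · have := le_add_card_of_rel _ hM' (adjGraph_flip R ▸ hG) hR (by omega)
    omega
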